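/- arXiv:math/0009032 — 3 statements merged into one kernel-verified Lean document; each statement's English description precedes it below -/
import Mathlib

section
/- Let R be a ring with unity such that the group of units U(R) contains an ω-subgroup. Then the set of nilpotent elements of the FC-subring ∇(R) forms a two-sided ideal of ∇(R): it is closed under addition, and closed under left and right multiplication by elements of ∇(R). -/
/-- The centralizer of a ring element `a` inside the unit group `Rˣ`. -/
def unitCentralizer {R : Type*} [Ring R] (a : R) : Subgroup Rˣ where
  carrier := {u : Rˣ | (u : R) * a = a * (u : R)}
  one_mem' := by simp
  mul_mem' := by
    intro u v hu hv
    have hu' : Commute ((u : Rˣ) : R) a := hu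
    have hv' : Commute ((v : Rˣ) : R) a := hv
    show ((u * v : Rˣ) : R) * a = a * ((u * v : Rˣ) : R)
    rw [Units.val_mul]
    exact hu'.mul_left hv'
  inv_mem' := by
    intro u hu
    have hu' : Commute ((u : Rˣ) : R) a := hu
    exact hu'.units_inv_left

@[simp] lemma mem_unitCentralizer {R : Type*} [Ring R] {a : R} {u : Rˣ} :
    u ∈ unitCentralizer a ↔ (u : R) * a = a * (u : R) := Iff.rfl

/-- The FC-subring `∇(R)` of a ring `R`: the set of elements whose centralizer
in the unit group has finite index. -/
def FCSubring (R : Type*) [Ring R] : Set R :=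
  {a : R | (unitCentralizer a).FiniteIndex}

/-- An infinite subgroup `H ≤ Rˣ` is an ω-subgroup if for every nonzero Lie
commutator `x*y - y*x` only finitely many elements of the form `1 - h`, `h ∈ H`,
annihilate it on the left. -/
def IsOmegaSubgroup {R : Type*} [Ring R] (H : Subgroup Rˣ) : Prop :=
  (H : Set Rˣ).Infinite ∧
    ∀ x y : R, x * y - y * x ≠ 0 →
      {h : Rˣ | h ∈ H ∧ (1 - (h : R)) * (x * y - y * x) = 0}.Finite

/-- The FC-radical `ΔU(R)` of the unit group: the subgroup of units having only
finitely many conjugates, i.e. whose centralizer has finite index. -/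
def FCRadical (R : Type*) [Ring R] : Subgroup Rˣ where
  carrier := {u : Rˣ | (unitCentralizer (u : R)).FiniteIndex}
  one_mem' := by
    have h : unitCentralizer ((1 : Rˣ) : R) = ⊤ := by
      ext u; simp
    show (unitCentralizer ((1 : Rˣ) : R)).FiniteIndex
    rw [h]
    infer_instance
  mul_mem' := by
    intro u v hu hv
    have hle : unitCentralizer (u : R) ⊓ unitCentralizer (v : R) ≤
        unitCentralizer ((u * v : Rˣ) : R) := by
      intro w hw
      have hwu : (w : R) * (u : R) = (u : R) * (w : R) := hw.1
      have hwv : (w : R) * (v : R) = (v : R) * (w : R) := hw.2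
      show (w : R) * ((u * v : Rˣ) : R) = ((u * v : Rˣ) : R) * (w : R)
      rw [Units.val_mul, ← mul_assoc, hwu, mul_assoc, hwv, ← mul_assoc]
    haveI : (unitCentralizer (u : R)).FiniteIndex := hu
    haveI : (unitCentralizer (v : R)).FiniteIndex := hv
    exact Subgroup.finiteIndex_of_le hle
  inv_mem' := by
    intro u hu
    have h : unitCentralizer ((u⁻¹ : Rˣ) : R) = unitCentralizer (u : R) := by
      ext w
      constructor
      · intro hw
        have hw' : Commute ((w : Rˣ) : R) ((u⁻¹ : Rˣ) : R) := hw
        have h2 : Commute ((w : Rˣ) : R) ((u⁻¹⁻¹ : Rˣ) : R) := hw'.units_inv_right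
        rw [inv_inv] at h2
        exact h2
      · intro hw
        have hw' : Commute ((w : Rˣ) : R) ((u : Rˣ) : R) := hw
        exact hw'.units_inv_right
    show (unitCentralizer ((u⁻¹ : Rˣ) : R)).FiniteIndex
    rw [h]
    exact hu

@[simp] lemma mem_FCRadical {R : Type*} [Ring R] {u : Rˣ} :
    u ∈ FCRadical R ↔ (unitCentralizer (u : R)).FiniteIndex := Iff.rfl

/-!
Let `x ∈ ∇(R)` with `x ^ m = 0`. The key step is: if `z ∈ ∇(R)` is nilpotent and `w ∈ ∇(R)`
satisfies `z w = w z = 0`, then `z b w = 0` for all `b ∈ ∇(R)`. Infinitely many `g` in the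
ω-subgroup commute with `z` and `w`; for those, `u = 1 + z g` is a unit with `u w = w`, so
`g (z b w) = u b u⁻¹ w - b w` takes only finitely many values (`b` has finitely many conjugates).
So the stabiliser of `z b w` has finite index in that infinite group, and its infinitely many
elements `h` satisfy `(1 - h) (z b w) = 0`; as `z b w = (z b) w - w (z b)`, it must vanish.
Induction on the number of letters `cᵢ` then kills every product `x c₁ x c₂ ⋯ c_k x` with at
least `m` factors `x`, so the ideal of `∇(R)` generated by `x` is nilpotent.
It contains `a x`, `x a`, and `(x + y) ^ n` whenever `y ^ n = 0`.
-/

open scoped Pointwise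

namespace Subgroup

variable {G : Type*} [Group G]

theorem finite_range_of_mul_mem_eq {α : Type*} (K : Subgroup G) [K.FiniteIndex] (f : G → α)
    (hf : ∀ g, ∀ k ∈ K, f (g * k) = f g) : (Set.range f).Finite := by
  refine (Set.finite_range fun q : G ⧸ K => f q.out).subset ?_
  rintro _ ⟨g, rfl⟩
  obtain ⟨k, hk⟩ := QuotientGroup.mk_out_eq_mul K g
  exact ⟨g, by simp only [hk, hf g k k.2]⟩

theorem infinite_inf_of_finiteIndex {H K : Subgroup G} [K.FiniteIndex]
    (hH : (H : Set G).Infinite) : ((H ⊓ K : Subgroup G) : Set G).Infinite := by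
  intro hfin
  have : Finite (K.subgroupOf H) := by
    rw [← inf_subgroupOf_left]
    have : Finite (H ⊓ K : Subgroup G) := hfin.to_subtype
    exact Finite.of_equiv _ (subgroupOfEquivOfLe inf_le_left).toEquiv.symm
  exact hH ((finite_iff_finite_and_finiteIndex (K.subgroupOf H)).2 ⟨this, inferInstance⟩)

end Subgroup

theorem MulAction.infinite_stabilizer_of_finite_orbit {G X : Type*} [Group G] [MulAction G X]
    [Infinite G] {x : X} (h : (orbit G x).Finite) : Infinite (stabilizer G x) := by
  have : (stabilizer G x).FiniteIndex := by
    rw [Subgroup.finiteIndex_iff, index_stabilizer]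
    exact (Set.ncard_pos h).2 ⟨x, mem_orbit_self x⟩ |>.ne'
  by_contra hfin
  rw [not_infinite_iff_finite] at hfin
  have := (Subgroup.finite_iff_finite_and_finiteIndex _).2 ⟨hfin, this⟩
  exact not_finite G

section FCSubring

variable {R : Type*} [Ring R]

theorem mem_FCSubring_of_forall_commute {c : R} (h : ∀ u : Rˣ, Commute (u : R) c) :
    c ∈ FCSubring R := by
  have : unitCentralizer c = ⊤ := eq_top_iff.2 fun u _ => (h u).eq
  show (unitCentralizer c).FiniteIndex
  rw [this]
  infer_instance

theorem mem_FCSubring_of_forall_commute₂ {a b c : R} (ha : a ∈ FCSubring R) (hb : b ∈ FCSubring R)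
    (h : ∀ u : Rˣ, Commute (u : R) a → Commute (u : R) b → Commute (u : R) c) :
    c ∈ FCSubring R := by
  have : (unitCentralizer a).FiniteIndex := ha
  have : (unitCentralizer b).FiniteIndex := hb
  exact Subgroup.finiteIndex_of_le (H := unitCentralizer a ⊓ unitCentralizer b)
    fun u hu => (h u hu.1 hu.2).eq

variable (R) in
def FCSubring.toSubring : Subring R where
  carrier := FCSubring R
  zero_mem' := mem_FCSubring_of_forall_commute fun _ => .zero_right _
  one_mem' := mem_FCSubring_of_forall_commute fun _ => .one_right _
  add_mem' ha hb := mem_FCSubring_of_forall_commute₂ ha hb fun _ => .add_right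
  mul_mem' ha hb := mem_FCSubring_of_forall_commute₂ ha hb fun _ => .mul_right
  neg_mem' ha := mem_FCSubring_of_forall_commute₂ ha ha fun _ hu _ => hu.neg_right

theorem finite_range_conj_of_mem_FCSubring {b : R} (hb : b ∈ FCSubring R) :
    (Set.range fun u : Rˣ => (u : R) * b * ↑u⁻¹).Finite := by
  have : (unitCentralizer b).FiniteIndex := hb
  refine (unitCentralizer b).finite_range_of_mul_mem_eq _ fun u k hk => ?_
  have hk : Commute (k : R) b := hk
  simp only [mul_inv_rev, Units.val_mul]
  rw [mul_assoc (u : R), hk.eq]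
  simp only [mul_assoc, Units.mul_inv_cancel_left]

end FCSubring

/-- `IsSandwich x k s w`: `w = x ^ f₀ * c₁ * x ^ f₁ * ⋯ * c_k * x ^ f_k` with all `cᵢ ∈ ∇(R)`,
`f₀, …, f_{k-1}` positive and `f₀ + ⋯ + f_k = s`. -/
inductive IsSandwich {R : Type*} [Ring R] (x : R) : ℕ → ℕ → R → Prop
  | pow (f : ℕ) : IsSandwich x 0 f (x ^ f)
  | cons {k s f : ℕ} {c w : R} (hf : 0 < f) (hc : c ∈ FCSubring R) (hw : IsSandwich x k s w) :
      IsSandwich x (k + 1) (f + s) (x ^ f * (c * w))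

namespace IsSandwich

variable {R : Type*} [Ring R] {x w : R} {k s : ℕ}

theorem pow_mul (h : IsSandwich x k s w) (f : ℕ) : IsSandwich x k (f + s) (x ^ f * w) := by
  cases h with
  | pow g => rw [← pow_add]; exact .pow _
  | cons hg hc hw => rw [← mul_assoc, ← pow_add, ← add_assoc]; exact .cons (by omega) hc hw

theorem mul_pow (h : IsSandwich x k s w) (f : ℕ) : IsSandwich x k (s + f) (w * x ^ f) := by
  induction h with
  | pow g => rw [← pow_add]; exact .pow _
  | cons hg hc _ ih => rw [mul_assoc, mul_assoc, add_assoc]; exact .cons hg hc ih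

theorem mem_FCSubring (hx : x ∈ FCSubring R) (h : IsSandwich x k s w) : w ∈ FCSubring R := by
  induction h with
  | pow f => exact (FCSubring.toSubring R).pow_mem hx f
  | cons _ hc _ ih =>
    exact (FCSubring.toSubring R).mul_mem ((FCSubring.toSubring R).pow_mem hx _)
      ((FCSubring.toSubring R).mul_mem hc ih)

end IsSandwich

namespace FCSubring

variable {R : Type*} [Ring R]

def idealSpan (x : R) : Submodule ℤ R :=
  Submodule.span ℤ (FCSubring R * {x} * FCSubring R)

theorem mul_mul_mem_idealSpan {a x b : R} (ha : a ∈ FCSubring R) (hb : b ∈ FCSubring R) :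
    a * x * b ∈ idealSpan x :=
  Submodule.subset_span (Set.mul_mem_mul (Set.mul_mem_mul ha rfl) hb)

theorem mul_mem_idealSpan_right {x r c : R} (hr : r ∈ idealSpan x) (hc : c ∈ FCSubring R) :
    r * c ∈ idealSpan x := by
  have := Submodule.mul_mem_mul hr (Submodule.subset_span (Set.mem_singleton c))
  rw [idealSpan, Submodule.span_mul_span] at this
  refine Submodule.span_mono ?_ this
  rw [mul_assoc]
  exact Set.mul_subset_mul_left (Set.mul_subset_iff.2 fun a ha _ hb => by
    rw [Set.mem_singleton_iff.1 hb]; exact (toSubring R).mul_mem ha hc)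

theorem add_pow_sub_pow_mem_idealSpan {x y : R} (hx : x ∈ FCSubring R) (hy : y ∈ FCSubring R)
    (n : ℕ) : (x + y) ^ n - y ^ n ∈ idealSpan x := by
  induction n with
  | zero => simp
  | succ n ih =>
    have hstep : (x + y) ^ (n + 1) - y ^ (n + 1) =
        ((x + y) ^ n - y ^ n) * (x + y) + y ^ n * x * 1 := by
      rw [pow_succ, pow_succ]; noncomm_ring
    rw [hstep]
    refine add_mem (mul_mem_idealSpan_right ih ((toSubring R).add_mem hx hy)) ?_
    exact mul_mul_mem_idealSpan ((toSubring R).pow_mem hy n) (toSubring R).one_mem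

theorem pow_mul_mul_subset {x : R} (j : ℕ) :
    (FCSubring R * {x} * FCSubring R) ^ (j + 1) ⊆
      FCSubring R * {w | IsSandwich x j (j + 1) w} * FCSubring R := by
  induction j with
  | zero =>
    rw [zero_add, pow_one]
    refine Set.mul_subset_mul_right (Set.mul_subset_mul_left (Set.singleton_subset_iff.2 ?_))
    simpa using IsSandwich.pow (x := x) 1
  | succ j ih =>
    rw [pow_succ']
    rintro _ ⟨_, ⟨_, ⟨a, ha, x, rfl, rfl⟩, b, hb, rfl⟩, _, hr, rfl⟩
    obtain ⟨_, ⟨a', ha', w, hw, rfl⟩, b', hb', rfl⟩ := ih hr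
    refine ⟨_, ⟨a, ha, x ^ 1 * ((b * a') * w), ?_, rfl⟩, b', hb', by
      simp only [pow_one, mul_assoc]⟩
    have := IsSandwich.cons zero_lt_one ((toSubring R).mul_mem hb ha') hw
    rwa [add_comm 1] at this

end FCSubring

namespace IsOmegaSubgroup

variable {R : Type*} [Ring R] {H : Subgroup Rˣ}

theorem mul_mul_eq_zero (hH : IsOmegaSubgroup H) {z b w : R} (hz : z ∈ FCSubring R)
    (hb : b ∈ FCSubring R) (hw : w ∈ FCSubring R) (hnil : IsNilpotent z) (hzw : z * w = 0)
    (hwz : w * z = 0) : z * (b * w) = 0 := by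
  have hcomm : z * b * w - w * (z * b) = z * (b * w) := by
    rw [← mul_assoc w, hwz, zero_mul, sub_zero, mul_assoc]
  by_contra hd
  have : (unitCentralizer z).FiniteIndex := hz
  have : (unitCentralizer w).FiniteIndex := hw
  let S := H ⊓ (unitCentralizer z ⊓ unitCentralizer w)
  have : Infinite S := (Subgroup.infinite_inf_of_finiteIndex hH.1).to_subtype
  have hconj : ∀ g : S, ∃ u : Rˣ, ((g : Rˣ) : R) * (z * (b * w)) = u * b * ↑u⁻¹ * w - b * w := by
    rintro ⟨g, -, hgz, hgw⟩
    have hgz : Commute (g : R) z := hgz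
    have hgw : Commute (g : R) w := hgw
    obtain ⟨u, hu⟩ := (hgz.symm.isNilpotent_mul_right hnil).isUnit_one_add
    have huw : (↑u⁻¹ : R) * w = w := by
      rw [Units.inv_mul_eq_iff_eq_mul, hu, add_mul, one_mul, mul_assoc, hgw.eq, ← mul_assoc,
        hzw, zero_mul, add_zero]
    refine ⟨u, ?_⟩
    calc (g : R) * (z * (b * w)) = z * g * b * w := by rw [← hgz.eq]; simp only [mul_assoc]
      _ = (1 + z * g) * b * w - b * w := by noncomm_ring
      _ = u * b * ↑u⁻¹ * w - b * w := by rw [mul_assoc _ (↑u⁻¹ : R), huw, hu]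
  have horbit : (MulAction.orbit S (z * (b * w))).Finite := by
    refine ((finite_range_conj_of_mem_FCSubring hb).image (· * w - b * w)).subset ?_
    rintro _ ⟨g, rfl⟩
    obtain ⟨u, hu⟩ := hconj g
    exact ⟨_, ⟨u, rfl⟩, hu.symm⟩
  have := MulAction.infinite_stabilizer_of_finite_orbit horbit
  refine Set.not_infinite.2 (hH.2 (z * b) w (hcomm ▸ hd)) ((Set.infinite_range_of_injective
    (f := fun g : MulAction.stabilizer S (z * (b * w)) => ((g : S) : Rˣ))
    (Subtype.val_injective.comp Subtype.val_injective)).mono ?_)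
  rintro _ ⟨⟨⟨g, hgH, -⟩, hg⟩, rfl⟩
  refine ⟨hgH, ?_⟩
  rw [hcomm, sub_mul, one_mul]
  exact sub_eq_zero.2 hg.symm

theorem eq_zero_of_isSandwich (hH : IsOmegaSubgroup H) {x w : R} {k s m : ℕ}
    (hx : x ∈ FCSubring R) (hm : x ^ m = 0) (h : IsSandwich x k s w) (hs : m ≤ s) : w = 0 := by
  induction k generalizing s w with
  | zero => cases h; exact pow_eq_zero_of_le hs hm
  | succ k ih =>
    obtain _ | ⟨hf, hc, hw⟩ := h
    exact hH.mul_mul_eq_zero ((FCSubring.toSubring R).pow_mem hx _) hc (hw.mem_FCSubring hx)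
      (.pow_of_pos ⟨m, hm⟩ hf.ne') (ih (hw.pow_mul _) (by omega)) (ih (hw.mul_pow _) (by omega))

theorem isNilpotent_of_mem_idealSpan (hH : IsOmegaSubgroup H) {x r : R} (hx : x ∈ FCSubring R)
    (hnx : IsNilpotent x) (hr : r ∈ FCSubring.idealSpan x) : IsNilpotent r := by
  obtain ⟨m, hm⟩ := hnx
  have hvanish : ∀ t ∈ (FCSubring R * {x} * FCSubring R) ^ (m + 1), t = 0 := by
    intro t ht
    obtain ⟨_, ⟨a, -, w, hw, rfl⟩, b, -, rfl⟩ := FCSubring.pow_mul_mul_subset m ht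
    simp [hH.eq_zero_of_isSandwich hx hm hw (by omega)]
  have hpow := Submodule.pow_mem_pow _ hr (m + 1)
  rw [FCSubring.idealSpan, Submodule.span_pow, Submodule.span_eq_bot.2 hvanish] at hpow
  exact ⟨m + 1, (Submodule.mem_bot ℤ).1 hpow⟩

end IsOmegaSubgroup

/-- If `U(R)` contains an ω-subgroup, then the set of nilpotent elements
of `∇(R)` is a two-sided ideal of `∇(R)`: closed under addition and under left and
right multiplication by elements of `∇(R)`. -/
theorem nilpotents_form_ideal (R : Type*) [Ring R]
    (H : Subgroup Rˣ) (hH : IsOmegaSubgroup H) :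
    (∀ x ∈ FCSubring R, ∀ y ∈ FCSubring R, IsNilpotent x → IsNilpotent y →
      x + y ∈ FCSubring R ∧ IsNilpotent (x + y)) ∧
    (∀ a ∈ FCSubring R, ∀ x ∈ FCSubring R, IsNilpotent x →
      (a * x ∈ FCSubring R ∧ IsNilpotent (a * x)) ∧
      (x * a ∈ FCSubring R ∧ IsNilpotent (x * a))) := by
  let A := FCSubring.toSubring R
  refine ⟨fun x hx y hy hnx hny => ⟨A.add_mem hx hy, ?_⟩,
    fun a ha x hx hnx => ⟨⟨A.mul_mem ha hx, ?_⟩, A.mul_mem hx ha, ?_⟩⟩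
  · obtain ⟨n, hn⟩ := hny
    have hsum := FCSubring.add_pow_sub_pow_mem_idealSpan hx hy n
    rw [hn, sub_zero] at hsum
    exact (hH.isNilpotent_of_mem_idealSpan hx hnx hsum).of_pow
  · simpa using
      hH.isNilpotent_of_mem_idealSpan hx hnx (FCSubring.mul_mul_mem_idealSpan ha A.one_mem)
  · simpa using
      hH.isNilpotent_of_mem_idealSpan hx hnx (FCSubring.mul_mul_mem_idealSpan A.one_mem ha)
end

section
/- Let R be an algebra over an infinite field F. If R is generated as an F-algebra by a set of units each of which is algebraic over F, then the FC-subring ∇(R) = {a ∈ R : [U(R) : C_{U(R)}(a)] < ∞} is contained in the center of R. -/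
/-! An algebraic element `s` has finite spectrum, so over an infinite field there are infinitely
many scalars `λ` with `λ - s` a unit. If `[Rˣ : C(a)]` is finite, two of these units, for `λ ≠ μ`,
lie in the same coset of `C(a)`, so `(λ - s)⁻¹ (μ - s) = 1 + (μ - λ) (λ - s)⁻¹` commutes with `a`,
and hence so does `s`. Every generator of `R` then commutes with `a`, so `a` is central. -/

open Polynomial in
lemma spectrum_subset_setOf_isRoot {F R : Type*} [Field F] [Ring R] [Algebra F R]
    {s : R} {p : F[X]} (hp : aeval s p = 0) : spectrum F s ⊆ {r | p.IsRoot r} := by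
  intro r hr
  have hpr : p.eval r ∈ spectrum F (0 : R) :=
    hp ▸ spectrum.subset_polynomial_aeval s p ⟨r, hr, rfl⟩
  by_contra hne
  exact spectrum.mem_iff.mp hpr (by simpa using (isUnit_iff_ne_zero.mpr hne).map (algebraMap F R))

lemma IsAlgebraic.infinite_resolventSet {F R : Type*} [Field F] [Infinite F] [Ring R]
    [Algebra F R] {s : R} (hs : IsAlgebraic F s) : (resolventSet F s).Infinite := by
  obtain ⟨p, hp0, hps⟩ := hs
  have hfin : (spectrum F s).Finite :=
    (Polynomial.finite_setOfPred_isRoot hp0).subset (spectrum_subset_setOf_isRoot hps)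
  simpa [spectrum] using hfin.infinite_compl

lemma commute_of_infinite_resolventSet {F R : Type*} [Field F] [Ring R] [Algebra F R]
    {a s : R} (ha : (unitCentralizer a).FiniteIndex) (hs : (resolventSet F s).Infinite) :
    Commute s a := by
  have : Finite (Rˣ ⧸ unitCentralizer a) := Subgroup.finite_quotient_of_finiteIndex
  have : Infinite (resolventSet F s) := hs.to_subtype
  obtain ⟨⟨l, hl⟩, ⟨m, hm⟩, hne, hcoset⟩ := Finite.exists_ne_map_eq_of_infinite
    fun r : resolventSet F s => (QuotientGroup.mk (spectrum.mem_resolventSet_iff.mp r.2).unit :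
      Rˣ ⧸ unitCentralizer a)
  set u := (spectrum.mem_resolventSet_iff.mp hl).unit
  set v := (spectrum.mem_resolventSet_iff.mp hm).unit
  have hu : (u : R) = algebraMap F R l - s := IsUnit.unit_spec _
  have hv : (v : R) = algebraMap F R m - s := IsUnit.unit_spec _
  have huv : u⁻¹ * v ∈ unitCentralizer a := QuotientGroup.eq.mp hcoset
  have hval : ((u⁻¹ * v : Rˣ) : R) = 1 + (m - l) • ((u⁻¹ : Rˣ) : R) := by
    have : (v : R) = u + algebraMap F R (m - l) := by rw [hu, hv, map_sub]; abel
    rw [Units.val_mul, this, mul_add, Units.inv_mul, ← Algebra.commutes, ← Algebra.smul_def]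
  have hsmul : Commute ((m - l) • ((u⁻¹ : Rˣ) : R)) a := by
    simpa [hval] using (show Commute ((u⁻¹ * v : Rˣ) : R) a from huv).sub_left (.one_left a)
  have hu_comm : Commute (u : R) a := by
    have hinv := hsmul.smul_left (m - l)⁻¹
    rw [smul_smul, inv_mul_cancel₀ (sub_ne_zero.mpr fun h => hne (Subtype.ext h.symm)), one_smul]
      at hinv
    simpa using hinv.units_inv_left
  have hs_eq : s = algebraMap F R l - u := by rw [hu]; abel
  rw [hs_eq]
  exact (Algebra.commute_algebraMap_left l a).sub_left hu_comm

/-- If an algebra over an infinite field is generated by algebraic units,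
then `∇(R)` lies in the center of `R`. -/
theorem fcSubring_central_of_generated_by_algebraic_units (F : Type*) [Field F]
    [Infinite F] (R : Type*) [Ring R] [Algebra F R]
    (S : Set R) (hS : ∀ s ∈ S, IsUnit s ∧ IsAlgebraic F s)
    (hgen : Algebra.adjoin F S = ⊤) :
    FCSubring R ⊆ Set.center R := by
  intro a ha
  refine Semigroup.mem_center_iff.mpr fun g => ?_
  have hg : g ∈ Algebra.adjoin F S := hgen ▸ Algebra.mem_top
  refine (Algebra.commute_of_mem_adjoin_of_forall_mem_commute hg fun s hs => ?_).symm.eq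
  exact (commute_of_infinite_resolventSet ha (hS s hs).2.infinite_resolventSet).symm
end

section
/- Let R be an algebra over an infinite field F. Then every element of finite order of the FC-radical ΔU = {u ∈ U(R) : [U(R) : C_{U(R)}(u)] < ∞} commutes with every element of the FC-subring ∇(R); in particular, any two finite-order elements of ΔU commute, so the torsion subgroup t(ΔU) is abelian. -/
theorem Subgroup.exists_ne_inv_mul_mem_of_infinite {G : Type*} [Group G] (H : Subgroup G)
    [H.FiniteIndex] {ι : Type*} [Infinite ι] (f : ι → G) :
    ∃ i j, i ≠ j ∧ (f i)⁻¹ * f j ∈ H := by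
  have : Finite (G ⧸ H) := Subgroup.finite_quotient_of_finiteIndex
  obtain ⟨i, j, hij, hf⟩ := Finite.exists_ne_map_eq_of_infinite fun i => (f i : G ⧸ H)
  exact ⟨i, j, hij, QuotientGroup.eq.1 hf⟩

theorem commute_of_inv_mul_mem_unitCentralizer {R : Type*} [Ring R] {a : R} {x y : Rˣ}
    (hxy : x⁻¹ * y ∈ unitCentralizer a) (hunit : IsUnit ((x : R) - y))
    (hcentral : (x : R) - y ∈ Set.center R) : Commute (x : R) a := by
  set b : R := x * a * ↑x⁻¹
  have hx : (x : R) * a = b * x := by simp [b, mul_assoc]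
  have hy : (y : R) * a = b * y := by
    have h := congrArg ((x : R) * ·) (mem_unitCentralizer.1 hxy)
    simpa only [Units.val_mul, ← mul_assoc, Units.mul_inv, one_mul] using h
  have hab : a = b := by
    apply hunit.mul_left_cancel
    rw [sub_mul, hx, hy, ← mul_sub, (Semigroup.mem_center_iff.1 hcentral b)]
  calc (x : R) * a = b * x := hx
    _ = a * x := by rw [← hab]

theorem Algebra.commute_of_finiteIndex_of_infinite_resolventSet {F R : Type*} [Field F]
    [Ring R] [Algebra F R] {u a : R} (hu : (resolventSet F u).Infinite)
    (ha : (unitCentralizer a).FiniteIndex) : Commute u a := by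
  have : Infinite (resolventSet F u) := hu.to_subtype
  let W : resolventSet F u → Rˣ := fun l => (spectrum.mem_resolventSet_iff.1 l.2).unit
  have hW : ∀ l, (W l : R) = algebraMap F R l - u := fun l => IsUnit.unit_spec _
  obtain ⟨l₁, l₂, hne, hmem⟩ := (unitCentralizer a).exists_ne_inv_mul_mem_of_infinite W
  have hdiff : (W l₁ : R) - W l₂ = algebraMap F R ((l₁ : F) - l₂) := by
    rw [hW, hW, map_sub]; abel
  have hunit : IsUnit ((W l₁ : R) - W l₂) := by
    rw [hdiff]
    exact (isUnit_iff_ne_zero.2 (sub_ne_zero.2 (Subtype.coe_injective.ne hne))).map _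
  have hcentral : (W l₁ : R) - W l₂ ∈ Set.center R := by
    rw [hdiff]; exact Subalgebra.algebraMap_mem (Subalgebra.center F R) _
  have hW₁ := commute_of_inv_mul_mem_unitCentralizer hmem hunit hcentral
  rw [hW] at hW₁
  simpa using (Algebra.commute_algebraMap_left (l₁ : F) a).sub_left hW₁

theorem IsOfFinOrder.finite_spectrum (F : Type*) {R : Type*} [Field F] [Ring R] [Algebra F R]
    {u : R} (hu : IsOfFinOrder u) : (spectrum F u).Finite := by
  obtain ⟨n, hn, hun⟩ := hu.exists_pow_eq_one
  refine (Polynomial.nthRootsFinset n (1 : F)).finite_toSet.subset fun k hk => ?_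
  cases subsingleton_or_nontrivial R
  · simp at hk
  rw [Finset.mem_coe, Polynomial.mem_nthRootsFinset hn, ← Set.mem_singleton_iff,
    ← spectrum.one_eq (A := R), ← hun]
  exact spectrum.pow_mem_pow u n hk

theorem Units.commute_of_isOfFinOrder_of_mem_FCSubring (F : Type*) {R : Type*} [Field F]
    [Infinite F] [Ring R] [Algebra F R] {u : Rˣ} (hu : IsOfFinOrder u) {a : R}
    (ha : a ∈ FCSubring R) : Commute (u : R) a := by
  have hspec := (Units.isOfFinOrder_val.2 hu).finite_spectrum F
  refine Algebra.commute_of_finiteIndex_of_infinite_resolventSet (F := F) ?_ ha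
  simpa only [spectrum, compl_compl] using hspec.infinite_compl

/-- Over an infinite field, every finite-order element of `ΔU` commutes
with every element of `∇(R)`; in particular any two finite-order elements of `ΔU`
commute, so `t(ΔU)` is abelian. -/
theorem torsion_fcRadical_abelian (F : Type*) [Field F] [Infinite F]
    (R : Type*) [Ring R] [Algebra F R] :
    (∀ u : Rˣ, u ∈ FCRadical R → IsOfFinOrder u →
      ∀ a ∈ FCSubring R, (u : R) * a = a * (u : R)) ∧
    (∀ u v : Rˣ, u ∈ FCRadical R → v ∈ FCRadical R →
      IsOfFinOrder u → IsOfFinOrder v → u * v = v * u) :=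
  ⟨fun _ _ hu _ ha => Units.commute_of_isOfFinOrder_of_mem_FCSubring F hu ha,
    fun _ _ _ hv hu _ =>
      Units.ext (Units.commute_of_isOfFinOrder_of_mem_FCSubring F hu hv)⟩
end
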